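/- Assume k ≠ 0. Then the bracket {f,g}~ = −(k/2)·H·{f,g} + {f,g}⁻ satisfies the Jacobi identity: for all smooth functions f, g, h : ℝⁿ×ℝⁿ → ℝ, {{f,g}~, h}~ + {{g,h}~, f}~ + {{h,f}~, g}~ = 0 at every point of ℝⁿ×ℝⁿ. -/

import Mathlib

open scoped BigOperators

noncomputable section

/-- Phase space `T*ℝⁿ = ℝⁿ × ℝⁿ`, points `x = (q, p)`. -/
abbrev Phase (n : ℕ) := (Fin n → ℝ) × (Fin n → ℝ)

/-- Partial derivative `∂f/∂qᵢ` of a function on phase space. -/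
def dq {n : ℕ} (f : Phase n → ℝ) (i : Fin n) (x : Phase n) : ℝ :=
  fderiv ℝ f x (Pi.single i 1, 0)

/-- Partial derivative `∂f/∂pᵢ` of a function on phase space. -/
def dp {n : ℕ} (f : Phase n → ℝ) (i : Fin n) (x : Phase n) : ℝ :=
  fderiv ℝ f x (0, Pi.single i 1)

/-- Partial derivative `∂V/∂qᵢ` of a potential on configuration space. -/
def dV {n : ℕ} (V : (Fin n → ℝ) → ℝ) (i : Fin n) (q : Fin n → ℝ) : ℝ :=
  fderiv ℝ V q (Pi.single i 1)

/-- The Hamiltonian `H(q,p) = Σᵢ pᵢ²/(2mᵢ) + V(q)`. -/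
def Ham {n : ℕ} (m : Fin n → ℝ) (V : (Fin n → ℝ) → ℝ) (x : Phase n) : ℝ :=
  (∑ i, x.2 i ^ 2 / (2 * m i)) + V x.1

/-- The Hamiltonian vector field `X` acting on functions:
`Xf = Σᵢ (pᵢ/mᵢ) ∂f/∂qᵢ − (∂V/∂qᵢ) ∂f/∂pᵢ`. -/
def Xop {n : ℕ} (m : Fin n → ℝ) (V : (Fin n → ℝ) → ℝ) (f : Phase n → ℝ) (x : Phase n) : ℝ :=
  ∑ i, (x.2 i / m i * dq f i x - dV V i x.1 * dp f i x)

/-- The canonical Poisson bracket `{f,g} = Σᵢ (∂f/∂qᵢ ∂g/∂pᵢ − ∂f/∂pᵢ ∂g/∂qᵢ)`. -/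
def bracketC {n : ℕ} (f g : Phase n → ℝ) (x : Phase n) : ℝ :=
  ∑ i, (dq f i x * dp g i x - dp f i x * dq g i x)

/-- `Āᵢⱼ = aⱼpᵢ/mᵢ − aᵢpⱼ/mⱼ`. -/
def Abar {n : ℕ} (m a : Fin n → ℝ) (i j : Fin n) (x : Phase n) : ℝ :=
  a j * x.2 i / m i - a i * x.2 j / m j

/-- `B̄ᵢⱼ = (k/(2mᵢ)) pᵢpⱼ + aᵢ ∂U/∂qⱼ`. -/
def Bbar {n : ℕ} (m a : Fin n → ℝ) (k : ℝ) (U : (Fin n → ℝ) → ℝ) (i j : Fin n)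
    (x : Phase n) : ℝ :=
  k / (2 * m i) * (x.2 i * x.2 j) + a i * dV U j x.1

/-- `C̄ᵢⱼ = (k/2)(pᵢ ∂U/∂qⱼ − pⱼ ∂U/∂qᵢ)`. -/
def Cbar {n : ℕ} (k : ℝ) (U : (Fin n → ℝ) → ℝ) (i j : Fin n) (x : Phase n) : ℝ :=
  k / 2 * (x.2 i * dV U j x.1 - x.2 j * dV U i x.1)

/-- The bracket `{f,g}⁻` associated with the bivector `P̄′`. -/
def bracketB {n : ℕ} (m a : Fin n → ℝ) (k : ℝ) (U : (Fin n → ℝ) → ℝ)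
    (f g : Phase n → ℝ) (x : Phase n) : ℝ :=
  ∑ i, ∑ j,
    (Abar m a i j x * (dq f i x * dq g j x)
      + Bbar m a k U i j x * (dq f i x * dp g j x - dp f j x * dq g i x)
      + Cbar k U i j x * (dp f i x * dp g j x))

/-- The bracket `{f,g}~ = −(k/2)·H·{f,g} + {f,g}⁻` of the bivector
`P̃ = −(k/2)H·P + P̄′`. -/
def bracketTilde {n : ℕ} (m a : Fin n → ℝ) (k : ℝ) (U : (Fin n → ℝ) → ℝ)
    (f g : Phase n → ℝ) (x : Phase n) : ℝ :=
  -(k / 2) * Ham m U x * bracketC f g x + bracketB m a k U f g x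

section BTJaux

variable {E : Type*} [NormedAddCommGroup E] [NormedSpace ℝ E]

lemma fda_add {f g : E → ℝ} {x : E} (hf : DifferentiableAt ℝ f x)
    (hg : DifferentiableAt ℝ g x) (v : E) :
    fderiv ℝ (fun y => f y + g y) x v = fderiv ℝ f x v + fderiv ℝ g x v := by
  rw [fderiv_fun_add hf hg]; rfl

lemma fda_sub {f g : E → ℝ} {x : E} (hf : DifferentiableAt ℝ f x)
    (hg : DifferentiableAt ℝ g x) (v : E) :
    fderiv ℝ (fun y => f y - g y) x v = fderiv ℝ f x v - fderiv ℝ g x v := by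
  rw [fderiv_fun_sub hf hg]; rfl

lemma fda_mul {f g : E → ℝ} {x : E} (hf : DifferentiableAt ℝ f x)
    (hg : DifferentiableAt ℝ g x) (v : E) :
    fderiv ℝ (fun y => f y * g y) x v = f x * fderiv ℝ g x v + g x * fderiv ℝ f x v := by
  rw [fderiv_fun_mul hf hg]; simp

lemma fda_const_mul {f : E → ℝ} {x : E} (hf : DifferentiableAt ℝ f x) (c : ℝ) (v : E) :
    fderiv ℝ (fun y => c * f y) x v = c * fderiv ℝ f x v := by
  rw [fderiv_const_mul hf c]; simp

lemma fda_const (c : ℝ) (x v : E) : fderiv ℝ (fun _ => c) x v = 0 := by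
  rw [fderiv_fun_const]; simp

lemma fda_sum {ι : Type*} (s : Finset ι) (F : ι → E → ℝ) {x : E}
    (h : ∀ i ∈ s, DifferentiableAt ℝ (F i) x) (v : E) :
    fderiv ℝ (fun y => ∑ i ∈ s, F i y) x v = ∑ i ∈ s, fderiv ℝ (F i) x v := by
  rw [fderiv_fun_sum h]; simp

lemma contDiff_fda {f : E → ℝ} (hf : ContDiff ℝ (⊤ : ℕ∞) f) (v : E) :
    ContDiff ℝ (⊤ : ℕ∞) (fun y => fderiv ℝ f y v) :=
  (hf.fderiv_right (by simp)).clm_apply contDiff_const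

lemma fda_symm {f : E → ℝ} (hf : ContDiff ℝ (⊤ : ℕ∞) f) (x v w : E) :
    fderiv ℝ (fun y => fderiv ℝ f y w) x v = fderiv ℝ (fun y => fderiv ℝ f y v) x w := by
  have hd : DifferentiableAt ℝ (fderiv ℝ f) x :=
    ((hf.fderiv_right (m := 1) (by exact WithTop.coe_le_coe.mpr le_top)).differentiable one_ne_zero).differentiableAt
  have e : ∀ u : E, fderiv ℝ (fun y => fderiv ℝ f y u) x
      = (fderiv ℝ (fderiv ℝ f) x).flip u := by
    intro u
    have h2 := fderiv_clm_apply (𝕜 := ℝ) (c := fderiv ℝ f) (u := fun _ => u) hd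
      (differentiableAt_const u)
    simpa using h2
  rw [e w, e v]
  have hsym := (hf.contDiffAt (x := x)).isSymmSndFDerivAt (by
    simp [minSmoothness_of_isRCLikeNormedField]; exact WithTop.coe_le_coe.mpr le_top)
  exact hsym v w

end BTJaux
section BTJaux2

variable {n : ℕ}

-- differentiability shorthand
lemma cdiff {f : Phase n → ℝ} (hf : ContDiff ℝ (⊤ : ℕ∞) f) (x : Phase n) :
    DifferentiableAt ℝ f x := (hf.differentiable (by simp)).differentiableAt

lemma cdiffV {V : (Fin n → ℝ) → ℝ} (hV : ContDiff ℝ (⊤ : ℕ∞) V) (q : Fin n → ℝ) :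
    DifferentiableAt ℝ V q := (hV.differentiable (by simp)).differentiableAt

lemma cd_dq {f : Phase n → ℝ} (hf : ContDiff ℝ (⊤ : ℕ∞) f) (i : Fin n) :
    ContDiff ℝ (⊤ : ℕ∞) (dq f i) := by
  unfold dq; exact contDiff_fda hf _

lemma cd_dp {f : Phase n → ℝ} (hf : ContDiff ℝ (⊤ : ℕ∞) f) (i : Fin n) :
    ContDiff ℝ (⊤ : ℕ∞) (dp f i) := by
  unfold dp; exact contDiff_fda hf _

lemma cd_dV {V : (Fin n → ℝ) → ℝ} (hV : ContDiff ℝ (⊤ : ℕ∞) V) (i : Fin n) :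
    ContDiff ℝ (⊤ : ℕ∞) (dV V i) := by
  unfold dV; exact contDiff_fda hV _

-- dq/dp calculus
lemma dq_add {f g : Phase n → ℝ} {x : Phase n} (hf : DifferentiableAt ℝ f x)
    (hg : DifferentiableAt ℝ g x) (i : Fin n) :
    dq (fun y => f y + g y) i x = dq f i x + dq g i x := fda_add hf hg _

lemma dp_add {f g : Phase n → ℝ} {x : Phase n} (hf : DifferentiableAt ℝ f x)
    (hg : DifferentiableAt ℝ g x) (i : Fin n) :
    dp (fun y => f y + g y) i x = dp f i x + dp g i x := fda_add hf hg _

lemma dq_sub {f g : Phase n → ℝ} {x : Phase n} (hf : DifferentiableAt ℝ f x)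
    (hg : DifferentiableAt ℝ g x) (i : Fin n) :
    dq (fun y => f y - g y) i x = dq f i x - dq g i x := fda_sub hf hg _

lemma dp_sub {f g : Phase n → ℝ} {x : Phase n} (hf : DifferentiableAt ℝ f x)
    (hg : DifferentiableAt ℝ g x) (i : Fin n) :
    dp (fun y => f y - g y) i x = dp f i x - dp g i x := fda_sub hf hg _

lemma dq_mul {f g : Phase n → ℝ} {x : Phase n} (hf : DifferentiableAt ℝ f x)
    (hg : DifferentiableAt ℝ g x) (i : Fin n) :
    dq (fun y => f y * g y) i x = f x * dq g i x + g x * dq f i x := fda_mul hf hg _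

lemma dp_mul {f g : Phase n → ℝ} {x : Phase n} (hf : DifferentiableAt ℝ f x)
    (hg : DifferentiableAt ℝ g x) (i : Fin n) :
    dp (fun y => f y * g y) i x = f x * dp g i x + g x * dp f i x := fda_mul hf hg _

lemma dq_const_mul {f : Phase n → ℝ} {x : Phase n} (hf : DifferentiableAt ℝ f x)
    (c : ℝ) (i : Fin n) :
    dq (fun y => c * f y) i x = c * dq f i x := fda_const_mul hf c _

lemma dp_const_mul {f : Phase n → ℝ} {x : Phase n} (hf : DifferentiableAt ℝ f x)
    (c : ℝ) (i : Fin n) :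
    dp (fun y => c * f y) i x = c * dp f i x := fda_const_mul hf c _

lemma dq_const (c : ℝ) (i : Fin n) (x : Phase n) : dq (fun _ => c) i x = 0 := fda_const c _ _
lemma dp_const (c : ℝ) (i : Fin n) (x : Phase n) : dp (fun _ => c) i x = 0 := fda_const c _ _

lemma dq_sum {ι : Type*} (s : Finset ι) (F : ι → Phase n → ℝ) {x : Phase n}
    (h : ∀ j ∈ s, DifferentiableAt ℝ (F j) x) (i : Fin n) :
    dq (fun y => ∑ j ∈ s, F j y) i x = ∑ j ∈ s, dq (F j) i x := fda_sum s F h _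

lemma dp_sum {ι : Type*} (s : Finset ι) (F : ι → Phase n → ℝ) {x : Phase n}
    (h : ∀ j ∈ s, DifferentiableAt ℝ (F j) x) (i : Fin n) :
    dp (fun y => ∑ j ∈ s, F j y) i x = ∑ j ∈ s, dp (F j) i x := fda_sum s F h _

-- Clairaut
lemma clQQ {f : Phase n → ℝ} (hf : ContDiff ℝ (⊤ : ℕ∞) f) (i l : Fin n) (x : Phase n) :
    dq (dq f i) l x = dq (dq f l) i x := by
  unfold dq; exact fda_symm hf x _ _

lemma clPP {f : Phase n → ℝ} (hf : ContDiff ℝ (⊤ : ℕ∞) f) (i l : Fin n) (x : Phase n) :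
    dp (dp f i) l x = dp (dp f l) i x := by
  unfold dp; exact fda_symm hf x _ _

lemma clQP {f : Phase n → ℝ} (hf : ContDiff ℝ (⊤ : ℕ∞) f) (i l : Fin n) (x : Phase n) :
    dq (dp f i) l x = dp (dq f l) i x := by
  unfold dq dp; exact fda_symm hf x _ _

lemma clVV {V : (Fin n → ℝ) → ℝ} (hV : ContDiff ℝ (⊤ : ℕ∞) V) (i l : Fin n) (q : Fin n → ℝ) :
    dV (dV V i) l q = dV (dV V l) i q := by
  unfold dV; exact fda_symm hV q _ _

-- composition with fst, coordinates
lemma dq_fst (V : (Fin n → ℝ) → ℝ) {x : Phase n} (hV : DifferentiableAt ℝ V x.1) (i : Fin n) :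
    dq (fun y => V y.1) i x = dV V i x.1 := by
  have h : fderiv ℝ (fun y : Phase n => V y.1) x
      = (fderiv ℝ V x.1).comp (ContinuousLinearMap.fst ℝ (Fin n → ℝ) (Fin n → ℝ)) :=
    (hV.hasFDerivAt.comp x hasFDerivAt_fst).fderiv
  unfold dq dV; rw [h]; rfl

lemma dp_fst (V : (Fin n → ℝ) → ℝ) {x : Phase n} (hV : DifferentiableAt ℝ V x.1) (i : Fin n) :
    dp (fun y => V y.1) i x = 0 := by
  have h : fderiv ℝ (fun y : Phase n => V y.1) x
      = (fderiv ℝ V x.1).comp (ContinuousLinearMap.fst ℝ (Fin n → ℝ) (Fin n → ℝ)) :=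
    (hV.hasFDerivAt.comp x hasFDerivAt_fst).fderiv
  unfold dp; rw [h]
  show fderiv ℝ V x.1 (((0, Pi.single i 1) : Phase n).1) = 0
  simp

lemma dq_snd (l i : Fin n) (x : Phase n) : dq (fun y : Phase n => y.2 l) i x = 0 := by
  have h : (fun y : Phase n => y.2 l)
      = (ContinuousLinearMap.proj (R := ℝ) (φ := fun _ : Fin n => ℝ) l).comp
        (ContinuousLinearMap.snd ℝ (Fin n → ℝ) (Fin n → ℝ)) := rfl
  unfold dq; rw [h, ContinuousLinearMap.fderiv]
  rfl

lemma dp_snd (l i : Fin n) (x : Phase n) : dp (fun y : Phase n => y.2 l) i x = (Pi.single i 1 : Fin n → ℝ) l := by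
  have h : (fun y : Phase n => y.2 l)
      = (ContinuousLinearMap.proj (R := ℝ) (φ := fun _ : Fin n => ℝ) l).comp
        (ContinuousLinearMap.snd ℝ (Fin n → ℝ) (Fin n → ℝ)) := rfl
  unfold dp; rw [h, ContinuousLinearMap.fderiv]
  rfl

lemma cd_snd (l : Fin n) : ContDiff ℝ (⊤ : ℕ∞) (fun y : Phase n => y.2 l) := by
  have h : (fun y : Phase n => y.2 l)
      = (ContinuousLinearMap.proj (R := ℝ) (φ := fun _ : Fin n => ℝ) l).comp
        (ContinuousLinearMap.snd ℝ (Fin n → ℝ) (Fin n → ℝ)) := rfl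
  rw [h]; exact ContinuousLinearMap.contDiff _

lemma cd_fst {V : (Fin n → ℝ) → ℝ} (hV : ContDiff ℝ (⊤ : ℕ∞) V) :
    ContDiff ℝ (⊤ : ℕ∞) (fun y : Phase n => V y.1) := hV.comp contDiff_fst

end BTJaux2
section BTJaux3

variable {n : ℕ}

/-- The conformal vector field `Y = Σ aᵢ ∂qᵢ + (k/2) pᵢ ∂pᵢ` acting on functions. -/
def Yop (a : Fin n → ℝ) (k : ℝ) (f : Phase n → ℝ) (x : Phase n) : ℝ :=
  ∑ i, (a i * dq f i x + k / 2 * x.2 i * dp f i x)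

/-- Generic first order operator with function coefficients. -/
def Lop (α β : Fin n → Phase n → ℝ) (f : Phase n → ℝ) (x : Phase n) : ℝ :=
  ∑ i, (α i x * dq f i x + β i x * dp f i x)

lemma cd_Lop {α β : Fin n → Phase n → ℝ} (hα : ∀ i, ContDiff ℝ (⊤ : ℕ∞) (α i))
    (hβ : ∀ i, ContDiff ℝ (⊤ : ℕ∞) (β i)) {f : Phase n → ℝ} (hf : ContDiff ℝ (⊤ : ℕ∞) f) :
    ContDiff ℝ (⊤ : ℕ∞) (Lop α β f) := by
  unfold Lop
  exact ContDiff.sum fun i _ => ((hα i).mul (cd_dq hf i)).add ((hβ i).mul (cd_dp hf i))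

lemma dq_Lop {α β : Fin n → Phase n → ℝ} (hα : ∀ i, ContDiff ℝ (⊤ : ℕ∞) (α i))
    (hβ : ∀ i, ContDiff ℝ (⊤ : ℕ∞) (β i)) {f : Phase n → ℝ} (hf : ContDiff ℝ (⊤ : ℕ∞) f)
    (i : Fin n) (x : Phase n) :
    dq (Lop α β f) i x
      = ∑ l, (α l x * dq (dq f l) i x + dq f l x * dq (α l) i x
          + (β l x * dq (dp f l) i x + dp f l x * dq (β l) i x)) := by
  have e : Lop α β f = fun y => ∑ l, (α l y * dq f l y + β l y * dp f l y) := rfl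
  rw [e, dq_sum Finset.univ _ (fun l _ =>
    (((hα l).mul (cd_dq hf l)).add ((hβ l).mul (cd_dp hf l)) |>.differentiable (by simp)).differentiableAt) i]
  exact Finset.sum_congr rfl fun l _ => by
    rw [dq_add (cdiff ((hα l).mul (cd_dq hf l)) x) (cdiff ((hβ l).mul (cd_dp hf l)) x),
      dq_mul (cdiff (hα l) x) (cdiff (cd_dq hf l) x),
      dq_mul (cdiff (hβ l) x) (cdiff (cd_dp hf l) x)]

lemma dp_Lop {α β : Fin n → Phase n → ℝ} (hα : ∀ i, ContDiff ℝ (⊤ : ℕ∞) (α i))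
    (hβ : ∀ i, ContDiff ℝ (⊤ : ℕ∞) (β i)) {f : Phase n → ℝ} (hf : ContDiff ℝ (⊤ : ℕ∞) f)
    (i : Fin n) (x : Phase n) :
    dp (Lop α β f) i x
      = ∑ l, (α l x * dp (dq f l) i x + dq f l x * dp (α l) i x
          + (β l x * dp (dp f l) i x + dp f l x * dp (β l) i x)) := by
  have e : Lop α β f = fun y => ∑ l, (α l y * dq f l y + β l y * dp f l y) := rfl
  rw [e, dp_sum Finset.univ _ (fun l _ =>
    (((hα l).mul (cd_dq hf l)).add ((hβ l).mul (cd_dp hf l)) |>.differentiable (by simp)).differentiableAt) i]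
  exact Finset.sum_congr rfl fun l _ => by
    rw [dp_add (cdiff ((hα l).mul (cd_dq hf l)) x) (cdiff ((hβ l).mul (cd_dp hf l)) x),
      dp_mul (cdiff (hα l) x) (cdiff (cd_dq hf l) x),
      dp_mul (cdiff (hβ l) x) (cdiff (cd_dp hf l) x)]

lemma cd_bracketC {f g : Phase n → ℝ} (hf : ContDiff ℝ (⊤ : ℕ∞) f) (hg : ContDiff ℝ (⊤ : ℕ∞) g) :
    ContDiff ℝ (⊤ : ℕ∞) (bracketC f g) := by
  unfold bracketC
  exact ContDiff.sum fun i _ => ((cd_dq hf i).mul (cd_dp hg i)).sub ((cd_dp hf i).mul (cd_dq hg i))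

lemma dq_bracketC {f g : Phase n → ℝ} (hf : ContDiff ℝ (⊤ : ℕ∞) f) (hg : ContDiff ℝ (⊤ : ℕ∞) g)
    (l : Fin n) (x : Phase n) :
    dq (bracketC f g) l x
      = ∑ i, (dq f i x * dq (dp g i) l x + dp g i x * dq (dq f i) l x
          - (dp f i x * dq (dq g i) l x + dq g i x * dq (dp f i) l x)) := by
  have e : bracketC f g = fun y => ∑ i, (dq f i y * dp g i y - dp f i y * dq g i y) := rfl
  rw [e, dq_sum Finset.univ _ (fun i _ =>
    cdiff (((cd_dq hf i).mul (cd_dp hg i)).sub ((cd_dp hf i).mul (cd_dq hg i))) x) l]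
  exact Finset.sum_congr rfl fun i _ => by
    rw [dq_sub (cdiff ((cd_dq hf i).mul (cd_dp hg i)) x) (cdiff ((cd_dp hf i).mul (cd_dq hg i)) x),
      dq_mul (cdiff (cd_dq hf i) x) (cdiff (cd_dp hg i) x),
      dq_mul (cdiff (cd_dp hf i) x) (cdiff (cd_dq hg i) x)]

lemma dp_bracketC {f g : Phase n → ℝ} (hf : ContDiff ℝ (⊤ : ℕ∞) f) (hg : ContDiff ℝ (⊤ : ℕ∞) g)
    (l : Fin n) (x : Phase n) :
    dp (bracketC f g) l x
      = ∑ i, (dq f i x * dp (dp g i) l x + dp g i x * dp (dq f i) l x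
          - (dp f i x * dp (dq g i) l x + dq g i x * dp (dp f i) l x)) := by
  have e : bracketC f g = fun y => ∑ i, (dq f i y * dp g i y - dp f i y * dq g i y) := rfl
  rw [e, dp_sum Finset.univ _ (fun i _ =>
    cdiff (((cd_dq hf i).mul (cd_dp hg i)).sub ((cd_dp hf i).mul (cd_dq hg i))) x) l]
  exact Finset.sum_congr rfl fun i _ => by
    rw [dp_sub (cdiff ((cd_dq hf i).mul (cd_dp hg i)) x) (cdiff ((cd_dp hf i).mul (cd_dq hg i)) x),
      dp_mul (cdiff (cd_dq hf i) x) (cdiff (cd_dp hg i) x),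
      dp_mul (cdiff (cd_dp hf i) x) (cdiff (cd_dq hg i) x)]

-- conversions to Lop form
lemma Xop_L (m : Fin n → ℝ) (U : (Fin n → ℝ) → ℝ) (f : Phase n → ℝ) (x : Phase n) :
    Xop m U f x = Lop (fun i y => y.2 i / m i) (fun i y => -(dV U i y.1)) f x := by
  unfold Xop Lop
  exact Finset.sum_congr rfl fun i _ => by ring

lemma Yop_L (a : Fin n → ℝ) (k : ℝ) (f : Phase n → ℝ) (x : Phase n) :
    Yop a k f x = Lop (fun i _ => a i) (fun i y => k / 2 * y.2 i) f x := by
  unfold Yop Lop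
  exact Finset.sum_congr rfl fun i _ => by ring

lemma bC_L (w f : Phase n → ℝ) (x : Phase n) :
    bracketC f w x = Lop (fun i y => dp w i y) (fun i y => -(dq w i y)) f x := by
  unfold bracketC Lop
  exact Finset.sum_congr rfl fun i _ => by ring

-- coefficient smoothness
lemma cd_Xα (m : Fin n → ℝ) (i : Fin n) : ContDiff ℝ (⊤ : ℕ∞) (fun y : Phase n => y.2 i / m i) := by
  have : (fun y : Phase n => y.2 i / m i) = fun y : Phase n => (m i)⁻¹ * y.2 i := by
    funext y; ring
  rw [this]; exact (contDiff_const).mul (cd_snd i)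

lemma cd_Xβ {U : (Fin n → ℝ) → ℝ} (hU : ContDiff ℝ (⊤ : ℕ∞) U) (i : Fin n) :
    ContDiff ℝ (⊤ : ℕ∞) (fun y : Phase n => -(dV U i y.1)) :=
  ((cd_dV hU i).comp contDiff_fst).neg

lemma cd_Yα (a : Fin n → ℝ) (i : Fin n) : ContDiff ℝ (⊤ : ℕ∞) (fun _ : Phase n => a i) := contDiff_const

lemma cd_Yβ (k : ℝ) (i : Fin n) : ContDiff ℝ (⊤ : ℕ∞) (fun y : Phase n => k / 2 * y.2 i) :=
  contDiff_const.mul (cd_snd i)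

lemma cd_Xop {m : Fin n → ℝ} {U : (Fin n → ℝ) → ℝ} (hU : ContDiff ℝ (⊤ : ℕ∞) U)
    {f : Phase n → ℝ} (hf : ContDiff ℝ (⊤ : ℕ∞) f) : ContDiff ℝ (⊤ : ℕ∞) (Xop m U f) := by
  have e : Xop m U f = Lop (fun i y => y.2 i / m i) (fun i y => -(dV U i y.1)) f := by
    funext x; exact Xop_L m U f x
  rw [e]; exact cd_Lop (cd_Xα m) (cd_Xβ hU) hf

lemma cd_Yop (a : Fin n → ℝ) (k : ℝ) {f : Phase n → ℝ} (hf : ContDiff ℝ (⊤ : ℕ∞) f) :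
    ContDiff ℝ (⊤ : ℕ∞) (Yop a k f) := by
  have e : Yop a k f = Lop (fun i _ => a i) (fun i y => k / 2 * y.2 i) f := by
    funext x; exact Yop_L a k f x
  rw [e]; exact cd_Lop (cd_Yα a) (cd_Yβ k) hf

-- Hamiltonian
lemma cd_kin (m : Fin n → ℝ) : ContDiff ℝ (⊤ : ℕ∞) (fun y : Phase n => ∑ j, y.2 j ^ 2 / (2 * m j)) := by
  apply ContDiff.sum fun j _ => ?_
  have e : (fun y : Phase n => y.2 j ^ 2 / (2 * m j))
      = fun y : Phase n => (2 * m j)⁻¹ * (y.2 j * y.2 j) := by funext y; ring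
  rw [e]; exact contDiff_const.mul ((cd_snd j).mul (cd_snd j))

lemma cd_Ham (m : Fin n → ℝ) {U : (Fin n → ℝ) → ℝ} (hU : ContDiff ℝ (⊤ : ℕ∞) U) :
    ContDiff ℝ (⊤ : ℕ∞) (Ham m U) := by
  unfold Ham
  exact (cd_kin m).add (cd_fst hU)

lemma dq_Ham (m : Fin n → ℝ) {U : (Fin n → ℝ) → ℝ} (hU : ContDiff ℝ (⊤ : ℕ∞) U)
    (i : Fin n) (x : Phase n) : dq (Ham m U) i x = dV U i x.1 := by
  have e : Ham m U = fun y => (∑ j, y.2 j ^ 2 / (2 * m j)) + U y.1 := rfl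
  rw [e, dq_add (cdiff (cd_kin m) x) (cdiff (cd_fst hU) x),
    dq_fst U (cdiffV hU x.1), dq_sum Finset.univ _ (fun j _ => by
      have e2 : (fun y : Phase n => y.2 j ^ 2 / (2 * m j))
          = fun y : Phase n => (2 * m j)⁻¹ * (y.2 j * y.2 j) := by funext y; ring
      rw [e2]
      exact cdiff (contDiff_const.mul ((cd_snd j).mul (cd_snd j))) x) i]
  have z : ∀ j : Fin n, dq (fun y : Phase n => y.2 j ^ 2 / (2 * m j)) i x = 0 := by
    intro j
    have e2 : (fun y : Phase n => y.2 j ^ 2 / (2 * m j))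
        = fun y : Phase n => (2 * m j)⁻¹ * (y.2 j * y.2 j) := by funext y; ring
    rw [e2, dq_const_mul (cdiff ((cd_snd j).mul (cd_snd j)) x),
      dq_mul (cdiff (cd_snd j) x) (cdiff (cd_snd j) x), dq_snd]
    ring
  rw [Finset.sum_congr rfl fun j _ => z j]
  simp

lemma dp_Ham (m : Fin n → ℝ) {U : (Fin n → ℝ) → ℝ} (hU : ContDiff ℝ (⊤ : ℕ∞) U)
    (i : Fin n) (x : Phase n) : dp (Ham m U) i x = x.2 i / m i := by
  have e : Ham m U = fun y => (∑ j, y.2 j ^ 2 / (2 * m j)) + U y.1 := rfl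
  rw [e, dp_add (cdiff (cd_kin m) x) (cdiff (cd_fst hU) x),
    dp_fst U (cdiffV hU x.1), dp_sum Finset.univ _ (fun j _ => by
      have e2 : (fun y : Phase n => y.2 j ^ 2 / (2 * m j))
          = fun y : Phase n => (2 * m j)⁻¹ * (y.2 j * y.2 j) := by funext y; ring
      rw [e2]
      exact cdiff (contDiff_const.mul ((cd_snd j).mul (cd_snd j))) x) i]
  have z : ∀ j : Fin n, dp (fun y : Phase n => y.2 j ^ 2 / (2 * m j)) i x
      = (2 * m j)⁻¹ * (x.2 j * (Pi.single i 1 : Fin n → ℝ) j + x.2 j * (Pi.single i 1 : Fin n → ℝ) j) := by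
    intro j
    have e2 : (fun y : Phase n => y.2 j ^ 2 / (2 * m j))
        = fun y : Phase n => (2 * m j)⁻¹ * (y.2 j * y.2 j) := by funext y; ring
    rw [e2, dp_const_mul (cdiff ((cd_snd j).mul (cd_snd j)) x),
      dp_mul (cdiff (cd_snd j) x) (cdiff (cd_snd j) x), dp_snd]
  rw [Finset.sum_congr rfl fun j _ => z j, Finset.sum_eq_single i
    (fun j _ hji => by rw [Pi.single_eq_of_ne hji]; ring)
    (fun hni => absurd (Finset.mem_univ i) hni)]
  rw [Pi.single_eq_same]
  ring

end BTJaux3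
section BTJaux4

variable {n : ℕ}

lemma sum_skew (t : Fin n → Fin n → ℝ) (h : ∀ i l, t i l + t l i = 0) :
    ∑ i, ∑ l, t i l = 0 := by
  have h1 : (∑ i, ∑ l, t i l) + (∑ i, ∑ l, t l i) = 0 := by
    rw [← Finset.sum_add_distrib]
    apply Finset.sum_eq_zero
    intro i _
    rw [← Finset.sum_add_distrib]
    exact Finset.sum_eq_zero fun l _ => h i l
  have h2 : (∑ i, ∑ l, t l i) = ∑ i, ∑ l, t i l := Finset.sum_comm
  rw [h2] at h1; linarith

lemma dsum_add (F G : Fin n → Fin n → ℝ) :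
    (∑ i, ∑ l, F i l) + (∑ i, ∑ l, G i l) = ∑ i, ∑ l, (F i l + G i l) := by
  rw [← Finset.sum_add_distrib]
  exact Finset.sum_congr rfl fun i _ => by rw [← Finset.sum_add_distrib]

lemma dsum_sub (F G : Fin n → Fin n → ℝ) :
    (∑ i, ∑ l, F i l) - (∑ i, ∑ l, G i l) = ∑ i, ∑ l, (F i l - G i l) := by
  rw [← Finset.sum_sub_distrib]
  exact Finset.sum_congr rfl fun i _ => by rw [← Finset.sum_sub_distrib]

/-- correction term in the Lie derivative formula -/
def GLcor (α β : Fin n → Phase n → ℝ) (f g : Phase n → ℝ) (x : Phase n) : ℝ :=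
  ∑ i, ∑ l,
    (dq (α l) i x * (dq f l x * dp g i x - dp f i x * dq g l x)
      + dq (β l) i x * (dp f l x * dp g i x - dp f i x * dp g l x)
      + dp (α l) i x * (dq f i x * dq g l x - dq f l x * dq g i x)
      + dp (β l) i x * (dq f i x * dp g l x - dp f l x * dq g i x))

/-- GL : Lie derivative of the canonical bracket along a vector field -/
lemma glGL {α β : Fin n → Phase n → ℝ} (hα : ∀ i, ContDiff ℝ (⊤ : ℕ∞) (α i))
    (hβ : ∀ i, ContDiff ℝ (⊤ : ℕ∞) (β i)) {f g : Phase n → ℝ}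
    (hf : ContDiff ℝ (⊤ : ℕ∞) f) (hg : ContDiff ℝ (⊤ : ℕ∞) g) (x : Phase n) :
    Lop α β (bracketC f g) x
      = bracketC (Lop α β f) g x + bracketC f (Lop α β g) x - GLcor α β f g x := by
  have hL : Lop α β (bracketC f g) x = ∑ i, ∑ l,
      (α l x * (dq f i x * dq (dp g i) l x + dp g i x * dq (dq f i) l x
          - (dp f i x * dq (dq g i) l x + dq g i x * dq (dp f i) l x))
        + β l x * (dq f i x * dp (dp g i) l x + dp g i x * dp (dq f i) l x
          - (dp f i x * dp (dq g i) l x + dq g i x * dp (dp f i) l x))) := by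
    calc Lop α β (bracketC f g) x
        = ∑ l, ∑ i,
          (α l x * (dq f i x * dq (dp g i) l x + dp g i x * dq (dq f i) l x
              - (dp f i x * dq (dq g i) l x + dq g i x * dq (dp f i) l x))
            + β l x * (dq f i x * dp (dp g i) l x + dp g i x * dp (dq f i) l x
              - (dp f i x * dp (dq g i) l x + dq g i x * dp (dp f i) l x))) := by
          refine Finset.sum_congr rfl fun l _ => ?_
          rw [dq_bracketC hf hg l x, dp_bracketC hf hg l x, Finset.mul_sum, Finset.mul_sum,
            ← Finset.sum_add_distrib]
      _ = _ := Finset.sum_comm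
  have hRf : bracketC (Lop α β f) g x = ∑ i, ∑ l,
      ((α l x * dq (dq f l) i x + dq f l x * dq (α l) i x
          + (β l x * dq (dp f l) i x + dp f l x * dq (β l) i x)) * dp g i x
        - (α l x * dp (dq f l) i x + dq f l x * dp (α l) i x
          + (β l x * dp (dp f l) i x + dp f l x * dp (β l) i x)) * dq g i x) := by
    refine Finset.sum_congr rfl fun i _ => ?_
    rw [dq_Lop hα hβ hf i x, dp_Lop hα hβ hf i x, Finset.sum_mul, Finset.sum_mul,
      ← Finset.sum_sub_distrib]
  have hRg : bracketC f (Lop α β g) x = ∑ i, ∑ l,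
      (dq f i x * (α l x * dp (dq g l) i x + dq g l x * dp (α l) i x
          + (β l x * dp (dp g l) i x + dp g l x * dp (β l) i x))
        - dp f i x * (α l x * dq (dq g l) i x + dq g l x * dq (α l) i x
          + (β l x * dq (dp g l) i x + dp g l x * dq (β l) i x))) := by
    refine Finset.sum_congr rfl fun i _ => ?_
    rw [dq_Lop hα hβ hg i x, dp_Lop hα hβ hg i x, Finset.mul_sum, Finset.mul_sum,
      ← Finset.sum_sub_distrib]
  rw [hL, hRf, hRg]
  unfold GLcor
  rw [dsum_add, dsum_sub]
  refine Finset.sum_congr rfl fun i _ => Finset.sum_congr rfl fun l _ => ?_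
  rw [clQQ hf l i x, clQP hf l i x, ← clQP hf i l x, clPP hf l i x,
    clQQ hg l i x, clQP hg l i x, ← clQP hg i l x, clPP hg l i x]
  ring

/-- GC : commutator of two first order operators is first order -/
lemma glGC {α β α' β' : Fin n → Phase n → ℝ} (hα : ∀ i, ContDiff ℝ (⊤ : ℕ∞) (α i))
    (hβ : ∀ i, ContDiff ℝ (⊤ : ℕ∞) (β i)) (hα' : ∀ i, ContDiff ℝ (⊤ : ℕ∞) (α' i))
    (hβ' : ∀ i, ContDiff ℝ (⊤ : ℕ∞) (β' i)) {f : Phase n → ℝ}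
    (hf : ContDiff ℝ (⊤ : ℕ∞) f) (x : Phase n) :
    Lop α β (Lop α' β' f) x - Lop α' β' (Lop α β f) x
      = ∑ i, ((Lop α β (α' i) x - Lop α' β' (α i) x) * dq f i x
          + (Lop α β (β' i) x - Lop α' β' (β i) x) * dp f i x) := by
  have h1 : Lop α β (Lop α' β' f) x = ∑ i, ∑ l,
      (α l x * (α' i x * dq (dq f i) l x + dq f i x * dq (α' i) l x
          + (β' i x * dq (dp f i) l x + dp f i x * dq (β' i) l x))
        + β l x * (α' i x * dp (dq f i) l x + dq f i x * dp (α' i) l x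
          + (β' i x * dp (dp f i) l x + dp f i x * dp (β' i) l x))) := by
    calc Lop α β (Lop α' β' f) x
        = ∑ l, ∑ i,
          (α l x * (α' i x * dq (dq f i) l x + dq f i x * dq (α' i) l x
              + (β' i x * dq (dp f i) l x + dp f i x * dq (β' i) l x))
            + β l x * (α' i x * dp (dq f i) l x + dq f i x * dp (α' i) l x
              + (β' i x * dp (dp f i) l x + dp f i x * dp (β' i) l x))) := by
          refine Finset.sum_congr rfl fun l _ => ?_
          rw [dq_Lop hα' hβ' hf l x, dp_Lop hα' hβ' hf l x, Finset.mul_sum, Finset.mul_sum,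
            ← Finset.sum_add_distrib]
      _ = _ := Finset.sum_comm
  have h2 : Lop α' β' (Lop α β f) x = ∑ i, ∑ l,
      (α' i x * (α l x * dq (dq f l) i x + dq f l x * dq (α l) i x
          + (β l x * dq (dp f l) i x + dp f l x * dq (β l) i x))
        + β' i x * (α l x * dp (dq f l) i x + dq f l x * dp (α l) i x
          + (β l x * dp (dp f l) i x + dp f l x * dp (β l) i x))) := by
    refine Finset.sum_congr rfl fun i _ => ?_
    rw [dq_Lop hα hβ hf i x, dp_Lop hα hβ hf i x, Finset.mul_sum, Finset.mul_sum,
      ← Finset.sum_add_distrib]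
  have h3 : (∑ i, ((Lop α β (α' i) x - Lop α' β' (α i) x) * dq f i x
          + (Lop α β (β' i) x - Lop α' β' (β i) x) * dp f i x)) = ∑ i, ∑ l,
      (((α l x * dq (α' i) l x + β l x * dp (α' i) l x)
          - (α' l x * dq (α i) l x + β' l x * dp (α i) l x)) * dq f i x
        + ((α l x * dq (β' i) l x + β l x * dp (β' i) l x)
          - (α' l x * dq (β i) l x + β' l x * dp (β i) l x)) * dp f i x) := by
    refine Finset.sum_congr rfl fun i _ => ?_
    unfold Lop
    rw [← Finset.sum_sub_distrib, ← Finset.sum_sub_distrib, Finset.sum_mul, Finset.sum_mul,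
      ← Finset.sum_add_distrib]
  rw [h1, h2, h3, dsum_sub, ← sub_eq_zero, dsum_sub]
  apply sum_skew
  intro i l
  rw [clQQ hf l i x, clQP hf l i x, ← clQP hf i l x, clPP hf l i x]
  ring

end BTJaux4
section BTJaux5

variable {n : ℕ}

lemma fda_neg' {E : Type*} [NormedAddCommGroup E] [NormedSpace ℝ E] (f : E → ℝ) (x v : E) :
    fderiv ℝ (fun y => -(f y)) x v = -(fderiv ℝ f x v) := by
  rw [fderiv_fun_neg]; rfl

lemma dq_neg (f : Phase n → ℝ) (i : Fin n) (x : Phase n) :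
    dq (fun y => -(f y)) i x = -(dq f i x) := fda_neg' f _ _
lemma dp_neg (f : Phase n → ℝ) (i : Fin n) (x : Phase n) :
    dp (fun y => -(f y)) i x = -(dp f i x) := fda_neg' f _ _

lemma bC_antisym (f g : Phase n → ℝ) (x : Phase n) :
    bracketC f g x = -(bracketC g f x) := by
  unfold bracketC
  rw [← Finset.sum_neg_distrib]
  exact Finset.sum_congr rfl fun i _ => by ring

lemma bC_neg_left (f g : Phase n → ℝ) (x : Phase n) :
    bracketC (fun y => -(f y)) g x = -(bracketC f g x) := by
  unfold bracketC
  rw [← Finset.sum_neg_distrib]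
  refine Finset.sum_congr rfl fun i _ => ?_
  rw [dq_neg, dp_neg]; ring

-- coefficient derivatives
lemma dq_Xa (m : Fin n → ℝ) (l i : Fin n) (x : Phase n) :
    dq (fun y : Phase n => y.2 l / m l) i x = 0 := by
  have e : (fun y : Phase n => y.2 l / m l) = fun y : Phase n => (m l)⁻¹ * y.2 l := by
    funext y; ring
  rw [e, dq_const_mul (cdiff (cd_snd l) x), dq_snd]; ring

lemma dp_Xa (m : Fin n → ℝ) (l i : Fin n) (x : Phase n) :
    dp (fun y : Phase n => y.2 l / m l) i x = (m l)⁻¹ * (Pi.single i 1 : Fin n → ℝ) l := by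
  have e : (fun y : Phase n => y.2 l / m l) = fun y : Phase n => (m l)⁻¹ * y.2 l := by
    funext y; ring
  rw [e, dp_const_mul (cdiff (cd_snd l) x), dp_snd]

lemma dq_Xb {U : (Fin n → ℝ) → ℝ} (hU : ContDiff ℝ (⊤ : ℕ∞) U) (l i : Fin n) (x : Phase n) :
    dq (fun y : Phase n => -(dV U l y.1)) i x = -(dV (dV U l) i x.1) := by
  rw [dq_neg (fun y : Phase n => dV U l y.1) i x, dq_fst (dV U l) (cdiffV (cd_dV hU l) x.1) i]

lemma dp_Xb {U : (Fin n → ℝ) → ℝ} (hU : ContDiff ℝ (⊤ : ℕ∞) U) (l i : Fin n) (x : Phase n) :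
    dp (fun y : Phase n => -(dV U l y.1)) i x = 0 := by
  rw [dp_neg (fun y : Phase n => dV U l y.1) i x, dp_fst (dV U l) (cdiffV (cd_dV hU l) x.1) i]
  ring

lemma dq_Yb (k : ℝ) (l i : Fin n) (x : Phase n) :
    dq (fun y : Phase n => k / 2 * y.2 l) i x = 0 := by
  rw [dq_const_mul (cdiff (cd_snd l) x), dq_snd]; ring

lemma dp_Yb (k : ℝ) (l i : Fin n) (x : Phase n) :
    dp (fun y : Phase n => k / 2 * y.2 l) i x = k / 2 * (Pi.single i 1 : Fin n → ℝ) l := by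
  rw [dp_const_mul (cdiff (cd_snd l) x), dp_snd]

-- differentiated Euler identity
lemma euler2 {U : (Fin n → ℝ) → ℝ} (hU : ContDiff ℝ (⊤ : ℕ∞) U) {a : Fin n → ℝ} {k : ℝ}
    (hEuler : ∀ q : Fin n → ℝ, ∑ i, a i * dV U i q = k * U q) (j : Fin n) (q : Fin n → ℝ) :
    ∑ l, a l * dV (dV U l) j q = k * dV U j q := by
  have hfun : (fun q' => ∑ l, a l * dV U l q') = fun q' => k * U q' := funext hEuler
  have h1 : dV (fun q' => ∑ l, a l * dV U l q') j q = ∑ l, a l * dV (dV U l) j q := by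
    have hs : dV (fun q' => ∑ l, a l * dV U l q') j q
        = ∑ l, dV (fun q' => a l * dV U l q') j q :=
      fda_sum Finset.univ _ (fun l _ => cdiffV (contDiff_const.mul (cd_dV hU l)) q) _
    rw [hs]
    exact Finset.sum_congr rfl fun l _ => fda_const_mul (cdiffV (cd_dV hU l) q) (a l) _
  have h2 : dV (fun q' => k * U q') j q = k * dV U j q :=
    fda_const_mul (cdiffV hU q) k _
  rw [← h1, hfun, h2]

-- Hamiltonian identities
lemma XH_eq {m : Fin n → ℝ} {U : (Fin n → ℝ) → ℝ} (hU : ContDiff ℝ (⊤ : ℕ∞) U) (x : Phase n) :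
    Xop m U (Ham m U) x = 0 := by
  unfold Xop
  apply Finset.sum_eq_zero
  intro i _
  rw [dq_Ham m hU i x, dp_Ham m hU i x]; ring

lemma YH_eq {m a : Fin n → ℝ} {U : (Fin n → ℝ) → ℝ} {k : ℝ} (hU : ContDiff ℝ (⊤ : ℕ∞) U)
    (hEuler : ∀ q : Fin n → ℝ, ∑ i, a i * dV U i q = k * U q) (x : Phase n) :
    Yop a k (Ham m U) x = k * Ham m U x := by
  unfold Yop
  have e : ∀ i : Fin n, a i * dq (Ham m U) i x + k / 2 * x.2 i * dp (Ham m U) i x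
      = a i * dV U i x.1 + k * (x.2 i ^ 2 / (2 * m i)) := by
    intro i
    rw [dq_Ham m hU i x, dp_Ham m hU i x]; ring
  rw [Finset.sum_congr rfl fun i _ => e i, Finset.sum_add_distrib, hEuler x.1]
  unfold Ham
  rw [mul_add, Finset.mul_sum]
  ring

lemma bC_Ham {m : Fin n → ℝ} {U : (Fin n → ℝ) → ℝ} (hU : ContDiff ℝ (⊤ : ℕ∞) U)
    (w : Phase n → ℝ) (x : Phase n) :
    bracketC (Ham m U) w x = -(Xop m U w x) := by
  unfold bracketC Xop
  rw [← Finset.sum_neg_distrib]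
  refine Finset.sum_congr rfl fun i _ => ?_
  rw [dq_Ham m hU i x, dp_Ham m hU i x]; ring

end BTJaux5
section BTJaux6

variable {n : ℕ}

/-- Jacobi identity for the canonical bracket. -/
lemma jacobiC {f g h : Phase n → ℝ} (hf : ContDiff ℝ (⊤ : ℕ∞) f) (hg : ContDiff ℝ (⊤ : ℕ∞) g)
    (hh : ContDiff ℝ (⊤ : ℕ∞) h) (x : Phase n) :
    bracketC (bracketC f g) h x + bracketC (bracketC g h) f x
      + bracketC (bracketC h f) g x = 0 := by
  have hGL := glGL (α := fun i y => dp h i y) (β := fun i y => -(dq h i y))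
    (fun i => cd_dp hh i) (fun i => (cd_dq hh i).neg) hf hg x
  have cf : Lop (fun i y => dp h i y) (fun i y => -(dq h i y)) f = bracketC f h :=
    funext fun y => (bC_L h f y).symm
  have cg : Lop (fun i y => dp h i y) (fun i y => -(dq h i y)) g = bracketC g h :=
    funext fun y => (bC_L h g y).symm
  have cfg : Lop (fun i y => dp h i y) (fun i y => -(dq h i y)) (bracketC f g) x
      = bracketC (bracketC f g) h x := (bC_L h (bracketC f g) x).symm
  have hcor : GLcor (fun i y => dp h i y) (fun i y => -(dq h i y)) f g x = 0 := by
    unfold GLcor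
    apply sum_skew
    intro i l
    rw [dq_neg (dq h l) i x, dp_neg (dq h l) i x, dq_neg (dq h i) l x, dp_neg (dq h i) l x,
      clQQ hh l i x, clPP hh l i x, clQP hh l i x, ← clQP hh i l x]
    ring
  rw [cf, cg, cfg, hcor, sub_zero] at hGL
  have a1 : bracketC f (bracketC g h) x = -(bracketC (bracketC g h) f x) := bC_antisym _ _ x
  have a2 : bracketC (bracketC f h) g x = -(bracketC (bracketC h f) g x) := by
    have e : bracketC f h = fun y => -(bracketC h f y) := funext fun y => bC_antisym f h y
    rw [e, bC_neg_left]
  rw [hGL, a1, a2]; ring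

/-- the Hamiltonian field `X` preserves the canonical bracket -/
lemma Xbracket {m : Fin n → ℝ} {U : (Fin n → ℝ) → ℝ} (hU : ContDiff ℝ (⊤ : ℕ∞) U)
    {f g : Phase n → ℝ} (hf : ContDiff ℝ (⊤ : ℕ∞) f) (hg : ContDiff ℝ (⊤ : ℕ∞) g) (x : Phase n) :
    Xop m U (bracketC f g) x = bracketC (Xop m U f) g x + bracketC f (Xop m U g) x := by
  have hGL := glGL (α := fun i y => y.2 i / m i) (β := fun i y => -(dV U i y.1))
    (cd_Xα m) (cd_Xβ hU) hf hg x
  have cf : Lop (fun i y => y.2 i / m i) (fun i y => -(dV U i y.1)) f = Xop m U f :=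
    funext fun y => (Xop_L m U f y).symm
  have cg : Lop (fun i y => y.2 i / m i) (fun i y => -(dV U i y.1)) g = Xop m U g :=
    funext fun y => (Xop_L m U g y).symm
  have cfg : Lop (fun i y => y.2 i / m i) (fun i y => -(dV U i y.1)) (bracketC f g) x
      = Xop m U (bracketC f g) x := (Xop_L m U (bracketC f g) x).symm
  have hcor : GLcor (fun i y => y.2 i / m i) (fun i y => -(dV U i y.1)) f g x = 0 := by
    unfold GLcor
    apply sum_skew
    intro i l
    rw [dq_Xa m l i x, dp_Xa m l i x, dq_Xb hU l i x, dp_Xb hU l i x,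
      dq_Xa m i l x, dp_Xa m i l x, dq_Xb hU i l x, dp_Xb hU i l x]
    rcases eq_or_ne i l with rfl | hne
    · ring
    · rw [Pi.single_eq_of_ne hne.symm, Pi.single_eq_of_ne hne, clVV hU l i x.1]
      ring
  rw [cf, cg, cfg, hcor, sub_zero] at hGL
  exact hGL

/-- the conformal field `Y` scales the canonical bracket -/
lemma Ybracket (a : Fin n → ℝ) (k : ℝ) {f g : Phase n → ℝ}
    (hf : ContDiff ℝ (⊤ : ℕ∞) f) (hg : ContDiff ℝ (⊤ : ℕ∞) g) (x : Phase n) :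
    Yop a k (bracketC f g) x
      = bracketC (Yop a k f) g x + bracketC f (Yop a k g) x - k / 2 * bracketC f g x := by
  have hGL := glGL (α := fun i (_ : Phase n) => a i) (β := fun i y => k / 2 * y.2 i)
    (cd_Yα a) (cd_Yβ k) hf hg x
  have cf : Lop (fun i (_ : Phase n) => a i) (fun i y => k / 2 * y.2 i) f = Yop a k f :=
    funext fun y => (Yop_L a k f y).symm
  have cg : Lop (fun i (_ : Phase n) => a i) (fun i y => k / 2 * y.2 i) g = Yop a k g :=
    funext fun y => (Yop_L a k g y).symm
  have cfg : Lop (fun i (_ : Phase n) => a i) (fun i y => k / 2 * y.2 i) (bracketC f g) x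
      = Yop a k (bracketC f g) x := (Yop_L a k (bracketC f g) x).symm
  have hcor : GLcor (fun i (_ : Phase n) => a i) (fun i y => k / 2 * y.2 i) f g x
      = k / 2 * bracketC f g x := by
    unfold GLcor
    calc (∑ i, ∑ l,
        (dq (fun _ => a l) i x * (dq f l x * dp g i x - dp f i x * dq g l x)
          + dq (fun y : Phase n => k / 2 * y.2 l) i x * (dp f l x * dp g i x - dp f i x * dp g l x)
          + dp (fun _ => a l) i x * (dq f i x * dq g l x - dq f l x * dq g i x)
          + dp (fun y : Phase n => k / 2 * y.2 l) i x * (dq f i x * dp g l x - dp f l x * dq g i x)))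
        = ∑ i, ∑ l, k / 2 * (Pi.single i 1 : Fin n → ℝ) l
            * (dq f i x * dp g l x - dp f l x * dq g i x) := by
          refine Finset.sum_congr rfl fun i _ => Finset.sum_congr rfl fun l _ => ?_
          rw [dq_const (a l) i x, dp_const (a l) i x, dq_Yb k l i x, dp_Yb k l i x]
          ring
      _ = ∑ i, k / 2 * (dq f i x * dp g i x - dp f i x * dq g i x) := by
          refine Finset.sum_congr rfl fun i _ => ?_
          rw [Finset.sum_eq_single i
            (fun l _ hl => by rw [Pi.single_eq_of_ne hl]; ring)
            (fun hni => absurd (Finset.mem_univ i) hni), Pi.single_eq_same]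
          ring
      _ = k / 2 * bracketC f g x := by
          unfold bracketC
          rw [Finset.mul_sum]
  rw [cf, cg, cfg, hcor] at hGL
  exact hGL

/-- commutator `[Y,X] = (k/2) X` -/
lemma YXcomm {m a : Fin n → ℝ} {k : ℝ} {U : (Fin n → ℝ) → ℝ} (hU : ContDiff ℝ (⊤ : ℕ∞) U)
    (hEuler : ∀ q : Fin n → ℝ, ∑ i, a i * dV U i q = k * U q)
    {f : Phase n → ℝ} (hf : ContDiff ℝ (⊤ : ℕ∞) f) (x : Phase n) :
    Yop a k (Xop m U f) x = Xop m U (Yop a k f) x + k / 2 * Xop m U f x := by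
  have hGC := glGC (α := fun i (_ : Phase n) => a i) (β := fun i y => k / 2 * y.2 i)
    (α' := fun i y => y.2 i / m i) (β' := fun i y => -(dV U i y.1))
    (cd_Yα a) (cd_Yβ k) (cd_Xα m) (cd_Xβ hU) hf x
  have cfX : Lop (fun i y => y.2 i / m i) (fun i y => -(dV U i y.1)) f = Xop m U f :=
    funext fun y => (Xop_L m U f y).symm
  have cfY : Lop (fun i (_ : Phase n) => a i) (fun i y => k / 2 * y.2 i) f = Yop a k f :=
    funext fun y => (Yop_L a k f y).symm
  rw [cfX, cfY] at hGC
  have cYX : Lop (fun i (_ : Phase n) => a i) (fun i y => k / 2 * y.2 i) (Xop m U f) x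
      = Yop a k (Xop m U f) x := (Yop_L a k (Xop m U f) x).symm
  have cXY : Lop (fun i y => y.2 i / m i) (fun i y => -(dV U i y.1)) (Yop a k f) x
      = Xop m U (Yop a k f) x := (Xop_L m U (Yop a k f) x).symm
  rw [cYX, cXY] at hGC
  have c1 : ∀ i : Fin n, Lop (fun i (_ : Phase n) => a i) (fun i y => k / 2 * y.2 i)
      (fun y => y.2 i / m i) x = k / 2 * (x.2 i / m i) := by
    intro i
    unfold Lop
    rw [Finset.sum_eq_single i
      (fun l _ hl => by
        rw [dq_Xa m i l x, dp_Xa m i l x, Pi.single_eq_of_ne hl.symm]; ring)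
      (fun hni => absurd (Finset.mem_univ i) hni),
      dq_Xa m i i x, dp_Xa m i i x, Pi.single_eq_same]
    ring
  have c2 : ∀ i : Fin n, Lop (fun i y => y.2 i / m i) (fun i y => -(dV U i y.1))
      (fun _ => a i) x = 0 := by
    intro i
    unfold Lop
    apply Finset.sum_eq_zero
    intro l _
    rw [dq_const (a i) l x, dp_const (a i) l x]; ring
  have c3 : ∀ i : Fin n, Lop (fun i (_ : Phase n) => a i) (fun i y => k / 2 * y.2 i)
      (fun y => -(dV U i y.1)) x = -(k * dV U i x.1) := by
    intro i
    unfold Lop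
    calc (∑ l, (a l * dq (fun y : Phase n => -(dV U i y.1)) l x
          + k / 2 * x.2 l * dp (fun y : Phase n => -(dV U i y.1)) l x))
        = ∑ l, -(a l * dV (dV U l) i x.1) := by
          refine Finset.sum_congr rfl fun l _ => ?_
          rw [dq_Xb hU i l x, dp_Xb hU i l x, clVV hU i l x.1]
          ring
      _ = -(∑ l, a l * dV (dV U l) i x.1) := by rw [Finset.sum_neg_distrib]
      _ = -(k * dV U i x.1) := by rw [euler2 hU hEuler i x.1]
  have c4 : ∀ i : Fin n, Lop (fun i y => y.2 i / m i) (fun i y => -(dV U i y.1))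
      (fun y : Phase n => k / 2 * y.2 i) x = -(k / 2 * dV U i x.1) := by
    intro i
    unfold Lop
    rw [Finset.sum_eq_single i
      (fun l _ hl => by
        rw [dq_Yb k i l x, dp_Yb k i l x, Pi.single_eq_of_ne hl.symm]; ring)
      (fun hni => absurd (Finset.mem_univ i) hni),
      dq_Yb k i i x, dp_Yb k i i x, Pi.single_eq_same]
    ring
  have hR : (∑ i, ((Lop (fun i (_ : Phase n) => a i) (fun i y => k / 2 * y.2 i)
        (fun y => y.2 i / m i) x
        - Lop (fun i y => y.2 i / m i) (fun i y => -(dV U i y.1)) (fun _ => a i) x)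
          * dq f i x
      + (Lop (fun i (_ : Phase n) => a i) (fun i y => k / 2 * y.2 i)
          (fun y => -(dV U i y.1)) x
        - Lop (fun i y => y.2 i / m i) (fun i y => -(dV U i y.1))
            (fun y : Phase n => k / 2 * y.2 i) x) * dp f i x))
      = k / 2 * Xop m U f x := by
    calc (∑ i, ((Lop (fun i (_ : Phase n) => a i) (fun i y => k / 2 * y.2 i)
          (fun y => y.2 i / m i) x
          - Lop (fun i y => y.2 i / m i) (fun i y => -(dV U i y.1)) (fun _ => a i) x)
            * dq f i x
        + (Lop (fun i (_ : Phase n) => a i) (fun i y => k / 2 * y.2 i)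
            (fun y => -(dV U i y.1)) x
          - Lop (fun i y => y.2 i / m i) (fun i y => -(dV U i y.1))
              (fun y : Phase n => k / 2 * y.2 i) x) * dp f i x))
        = ∑ i, k / 2 * (x.2 i / m i * dq f i x - dV U i x.1 * dp f i x) := by
          refine Finset.sum_congr rfl fun i _ => ?_
          rw [c1 i, c2 i, c3 i, c4 i]
          ring
      _ = k / 2 * Xop m U f x := by
          unfold Xop
          rw [Finset.mul_sum]
  rw [hR] at hGC
  linarith [hGC]

end BTJaux6
section BTJaux7

variable {n : ℕ}

/-- `{f,g}⁻ = Xf·Yg − Yf·Xg` -/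
lemma bracketB_eq (m a : Fin n → ℝ) (k : ℝ) (U : (Fin n → ℝ) → ℝ)
    (f g : Phase n → ℝ) (x : Phase n) :
    bracketB m a k U f g x
      = Xop m U f x * Yop a k g x - Yop a k f x * Xop m U g x := by
  have e1 : Xop m U f x * Yop a k g x
      = ∑ i, ∑ j, ((x.2 i / m i * dq f i x - dV U i x.1 * dp f i x)
          * (a j * dq g j x + k / 2 * x.2 j * dp g j x)) := by
    unfold Xop Yop
    rw [Finset.sum_mul_sum]
  have e2 : Yop a k f x * Xop m U g x
      = ∑ i, ∑ j, ((a i * dq f i x + k / 2 * x.2 i * dp f i x)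
          * (x.2 j / m j * dq g j x - dV U j x.1 * dp g j x)) := by
    unfold Xop Yop
    rw [Finset.sum_mul_sum]
  rw [← sub_eq_zero, e1, e2, dsum_sub]
  unfold bracketB
  rw [dsum_sub]
  apply sum_skew
  intro i j
  unfold Abar Bbar Cbar
  ring

lemma fda_shape {E' : Type*} [NormedAddCommGroup E'] [NormedSpace ℝ E'] (c : ℝ)
    (A B C D F G : E' → ℝ) {x : E'} (hA : DifferentiableAt ℝ A x)
    (hB : DifferentiableAt ℝ B x) (hC : DifferentiableAt ℝ C x)
    (hD : DifferentiableAt ℝ D x) (hF : DifferentiableAt ℝ F x)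
    (hG : DifferentiableAt ℝ G x) (v : E') :
    fderiv ℝ (fun y => c * A y * B y + (C y * D y - F y * G y)) x v
      = c * (A x * fderiv ℝ B x v + B x * fderiv ℝ A x v)
        + ((C x * fderiv ℝ D x v + D x * fderiv ℝ C x v)
          - (F x * fderiv ℝ G x v + G x * fderiv ℝ F x v)) := by
  rw [fda_add (f := fun y => c * A y * B y) (g := fun y => C y * D y - F y * G y)
      ((hA.const_mul c).mul hB) ((hC.mul hD).sub (hF.mul hG)),
    fda_mul (hA.const_mul c) hB, fda_const_mul hA c,
    fda_sub (f := fun y => C y * D y) (g := fun y => F y * G y) (hC.mul hD) (hF.mul hG), fda_mul hC hD, fda_mul hF hG]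
  ring

lemma dq_shape (c : ℝ) (A B C D F G : Phase n → ℝ) {x : Phase n}
    (hA : DifferentiableAt ℝ A x) (hB : DifferentiableAt ℝ B x)
    (hC : DifferentiableAt ℝ C x) (hD : DifferentiableAt ℝ D x)
    (hF : DifferentiableAt ℝ F x) (hG : DifferentiableAt ℝ G x) (i : Fin n) :
    dq (fun y => c * A y * B y + (C y * D y - F y * G y)) i x
      = c * (A x * dq B i x + B x * dq A i x)
        + ((C x * dq D i x + D x * dq C i x) - (F x * dq G i x + G x * dq F i x)) :=
  fda_shape c A B C D F G hA hB hC hD hF hG _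

lemma dp_shape (c : ℝ) (A B C D F G : Phase n → ℝ) {x : Phase n}
    (hA : DifferentiableAt ℝ A x) (hB : DifferentiableAt ℝ B x)
    (hC : DifferentiableAt ℝ C x) (hD : DifferentiableAt ℝ D x)
    (hF : DifferentiableAt ℝ F x) (hG : DifferentiableAt ℝ G x) (i : Fin n) :
    dp (fun y => c * A y * B y + (C y * D y - F y * G y)) i x
      = c * (A x * dp B i x + B x * dp A i x)
        + ((C x * dp D i x + D x * dp C i x) - (F x * dp G i x + G x * dp F i x)) :=
  fda_shape c A B C D F G hA hB hC hD hF hG _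

lemma Lop_shape (α β : Fin n → Phase n → ℝ) (c : ℝ) (A B C D F G : Phase n → ℝ)
    {x : Phase n} (hA : DifferentiableAt ℝ A x) (hB : DifferentiableAt ℝ B x)
    (hC : DifferentiableAt ℝ C x) (hD : DifferentiableAt ℝ D x)
    (hF : DifferentiableAt ℝ F x) (hG : DifferentiableAt ℝ G x) :
    Lop α β (fun y => c * A y * B y + (C y * D y - F y * G y)) x
      = c * (A x * Lop α β B x + B x * Lop α β A x)
        + ((C x * Lop α β D x + D x * Lop α β C x)
          - (F x * Lop α β G x + G x * Lop α β F x)) := by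
  unfold Lop
  calc (∑ i, (α i x * dq (fun y => c * A y * B y + (C y * D y - F y * G y)) i x
        + β i x * dp (fun y => c * A y * B y + (C y * D y - F y * G y)) i x))
      = ∑ i, (α i x * (c * (A x * dq B i x + B x * dq A i x)
          + ((C x * dq D i x + D x * dq C i x) - (F x * dq G i x + G x * dq F i x)))
        + β i x * (c * (A x * dp B i x + B x * dp A i x)
          + ((C x * dp D i x + D x * dp C i x) - (F x * dp G i x + G x * dp F i x)))) := by
        refine Finset.sum_congr rfl fun i _ => ?_
        rw [dq_shape c A B C D F G hA hB hC hD hF hG i,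
          dp_shape c A B C D F G hA hB hC hD hF hG i]
    _ = _ := by
        simp only [Finset.mul_sum, ← Finset.sum_add_distrib, ← Finset.sum_sub_distrib]
        exact Finset.sum_congr rfl fun i _ => by ring

lemma X_shape (m : Fin n → ℝ) (U : (Fin n → ℝ) → ℝ) (c : ℝ) (A B C D F G : Phase n → ℝ)
    {x : Phase n} (hA : DifferentiableAt ℝ A x) (hB : DifferentiableAt ℝ B x)
    (hC : DifferentiableAt ℝ C x) (hD : DifferentiableAt ℝ D x)
    (hF : DifferentiableAt ℝ F x) (hG : DifferentiableAt ℝ G x) :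
    Xop m U (fun y => c * A y * B y + (C y * D y - F y * G y)) x
      = c * (A x * Xop m U B x + B x * Xop m U A x)
        + ((C x * Xop m U D x + D x * Xop m U C x)
          - (F x * Xop m U G x + G x * Xop m U F x)) := by
  rw [Xop_L m U _ x, Lop_shape _ _ c A B C D F G hA hB hC hD hF hG,
    ← Xop_L m U A x, ← Xop_L m U B x, ← Xop_L m U C x, ← Xop_L m U D x,
    ← Xop_L m U F x, ← Xop_L m U G x]

lemma Y_shape (a : Fin n → ℝ) (k : ℝ) (c : ℝ) (A B C D F G : Phase n → ℝ)
    {x : Phase n} (hA : DifferentiableAt ℝ A x) (hB : DifferentiableAt ℝ B x)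
    (hC : DifferentiableAt ℝ C x) (hD : DifferentiableAt ℝ D x)
    (hF : DifferentiableAt ℝ F x) (hG : DifferentiableAt ℝ G x) :
    Yop a k (fun y => c * A y * B y + (C y * D y - F y * G y)) x
      = c * (A x * Yop a k B x + B x * Yop a k A x)
        + ((C x * Yop a k D x + D x * Yop a k C x)
          - (F x * Yop a k G x + G x * Yop a k F x)) := by
  rw [Yop_L a k _ x, Lop_shape _ _ c A B C D F G hA hB hC hD hF hG,
    ← Yop_L a k A x, ← Yop_L a k B x, ← Yop_L a k C x, ← Yop_L a k D x,
    ← Yop_L a k F x, ← Yop_L a k G x]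

lemma bC_shape (w : Phase n → ℝ) (c : ℝ) (A B C D F G : Phase n → ℝ)
    {x : Phase n} (hA : DifferentiableAt ℝ A x) (hB : DifferentiableAt ℝ B x)
    (hC : DifferentiableAt ℝ C x) (hD : DifferentiableAt ℝ D x)
    (hF : DifferentiableAt ℝ F x) (hG : DifferentiableAt ℝ G x) :
    bracketC (fun y => c * A y * B y + (C y * D y - F y * G y)) w x
      = c * (A x * bracketC B w x + B x * bracketC A w x)
        + ((C x * bracketC D w x + D x * bracketC C w x)
          - (F x * bracketC G w x + G x * bracketC F w x)) := by
  rw [bC_L w _ x, Lop_shape _ _ c A B C D F G hA hB hC hD hF hG,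
    ← bC_L w A x, ← bC_L w B x, ← bC_L w C x, ← bC_L w D x,
    ← bC_L w F x, ← bC_L w G x]

end BTJaux7
/-- for `k ≠ 0`, the bracket `{·,·}~` satisfies the Jacobi identity. -/
theorem bracketTilde_jacobi (n : ℕ) (m : Fin n → ℝ) (hm : ∀ i, 0 < m i)
    (a : Fin n → ℝ) (k : ℝ) (hk : k ≠ 0)
    (U : (Fin n → ℝ) → ℝ) (hU : ContDiff ℝ (⊤ : ℕ∞) U)
    (hEuler : ∀ q : Fin n → ℝ, ∑ i, a i * dV U i q = k * U q)
    (f g h : Phase n → ℝ) (hf : ContDiff ℝ (⊤ : ℕ∞) f) (hg : ContDiff ℝ (⊤ : ℕ∞) g)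
    (hh : ContDiff ℝ (⊤ : ℕ∞) h) :
    ∀ x : Phase n,
      bracketTilde m a k U (fun y => bracketTilde m a k U f g y) h x
        + bracketTilde m a k U (fun y => bracketTilde m a k U g h y) f x
        + bracketTilde m a k U (fun y => bracketTilde m a k U h f y) g x = 0 := by
  intro x
  have tilde_eq : ∀ u v : Phase n → ℝ, bracketTilde m a k U u v
      = fun y => -(k / 2) * Ham m U y * bracketC u v y
        + (Xop m U u y * Yop a k v y - Yop a k u y * Xop m U v y) := by
    intro u v
    funext y
    show -(k / 2) * Ham m U y * bracketC u v y + bracketB m a k U u v y = _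
    rw [bracketB_eq m a k U u v y]
  simp only [tilde_eq]
  have dHam := cdiff (cd_Ham m hU) x
  have dCfg := cdiff (cd_bracketC hf hg) x
  have dCgh := cdiff (cd_bracketC hg hh) x
  have dChf := cdiff (cd_bracketC hh hf) x
  have dXf := cdiff (cd_Xop (m := m) hU hf) x
  have dXg := cdiff (cd_Xop (m := m) hU hg) x
  have dXh := cdiff (cd_Xop (m := m) hU hh) x
  have dYf := cdiff (cd_Yop a k hf) x
  have dYg := cdiff (cd_Yop a k hg) x
  have dYh := cdiff (cd_Yop a k hh) x
  rw [bC_shape h (-(k / 2)) (Ham m U) (bracketC f g) (Xop m U f) (Yop a k g)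
      (Yop a k f) (Xop m U g) dHam dCfg dXf dYg dYf dXg,
    X_shape m U (-(k / 2)) (Ham m U) (bracketC f g) (Xop m U f) (Yop a k g)
      (Yop a k f) (Xop m U g) dHam dCfg dXf dYg dYf dXg,
    Y_shape a k (-(k / 2)) (Ham m U) (bracketC f g) (Xop m U f) (Yop a k g)
      (Yop a k f) (Xop m U g) dHam dCfg dXf dYg dYf dXg,
    bC_shape f (-(k / 2)) (Ham m U) (bracketC g h) (Xop m U g) (Yop a k h)
      (Yop a k g) (Xop m U h) dHam dCgh dXg dYh dYg dXh,
    X_shape m U (-(k / 2)) (Ham m U) (bracketC g h) (Xop m U g) (Yop a k h)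
      (Yop a k g) (Xop m U h) dHam dCgh dXg dYh dYg dXh,
    Y_shape a k (-(k / 2)) (Ham m U) (bracketC g h) (Xop m U g) (Yop a k h)
      (Yop a k g) (Xop m U h) dHam dCgh dXg dYh dYg dXh,
    bC_shape g (-(k / 2)) (Ham m U) (bracketC h f) (Xop m U h) (Yop a k f)
      (Yop a k h) (Xop m U f) dHam dChf dXh dYf dYh dXf,
    X_shape m U (-(k / 2)) (Ham m U) (bracketC h f) (Xop m U h) (Yop a k f)
      (Yop a k h) (Xop m U f) dHam dChf dXh dYf dYh dXf,
    Y_shape a k (-(k / 2)) (Ham m U) (bracketC h f) (Xop m U h) (Yop a k f)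
      (Yop a k h) (Xop m U f) dHam dChf dXh dYf dYh dXf]
  have hXC_fg : Xop m U (bracketC f g) x
      = bracketC (Xop m U f) g x - bracketC (Xop m U g) f x := by
    rw [Xbracket hU hf hg x, bC_antisym f (Xop m U g) x]; ring
  have hXC_gh : Xop m U (bracketC g h) x
      = bracketC (Xop m U g) h x - bracketC (Xop m U h) g x := by
    rw [Xbracket hU hg hh x, bC_antisym g (Xop m U h) x]; ring
  have hXC_hf : Xop m U (bracketC h f) x
      = bracketC (Xop m U h) f x - bracketC (Xop m U f) h x := by
    rw [Xbracket hU hh hf x, bC_antisym h (Xop m U f) x]; ring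
  have hYC_fg : Yop a k (bracketC f g) x
      = bracketC (Yop a k f) g x - bracketC (Yop a k g) f x - k / 2 * bracketC f g x := by
    rw [Ybracket a k hf hg x, bC_antisym f (Yop a k g) x]; ring
  have hYC_gh : Yop a k (bracketC g h) x
      = bracketC (Yop a k g) h x - bracketC (Yop a k h) g x - k / 2 * bracketC g h x := by
    rw [Ybracket a k hg hh x, bC_antisym g (Yop a k h) x]; ring
  have hYC_hf : Yop a k (bracketC h f) x
      = bracketC (Yop a k h) f x - bracketC (Yop a k f) h x - k / 2 * bracketC h f x := by
    rw [Ybracket a k hh hf x, bC_antisym h (Yop a k f) x]; ring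
  have hYXf : Yop a k (Xop m U f) x = Xop m U (Yop a k f) x + k / 2 * Xop m U f x :=
    YXcomm hU hEuler hf x
  have hYXg : Yop a k (Xop m U g) x = Xop m U (Yop a k g) x + k / 2 * Xop m U g x :=
    YXcomm hU hEuler hg x
  have hYXh : Yop a k (Xop m U h) x = Xop m U (Yop a k h) x + k / 2 * Xop m U h x :=
    YXcomm hU hEuler hh x
  have hXH : Xop m U (Ham m U) x = 0 := XH_eq hU x
  have hYH : Yop a k (Ham m U) x = k * Ham m U x := YH_eq hU hEuler x
  have hCHf : bracketC (Ham m U) f x = -(Xop m U f x) := bC_Ham hU f x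
  have hCHg : bracketC (Ham m U) g x = -(Xop m U g x) := bC_Ham hU g x
  have hCHh : bracketC (Ham m U) h x = -(Xop m U h x) := bC_Ham hU h x
  have hJac := jacobiC hf hg hh x
  rw [hXC_fg, hXC_gh, hXC_hf, hYC_fg, hYC_gh, hYC_hf, hYXf, hYXg, hYXh,
    hXH, hYH, hCHf, hCHg, hCHh]
  linear_combination (k ^ 2 / 4 * Ham m U x ^ 2) * hJac
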